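/- arXiv:2102.07374 — 2 statements merged into one kernel-verified Lean document; each statement's English description precedes it below -/
import Mathlib

section
/- The concatenation axiom for complement is sound: for match expressions e of width n₁ and e' of width n₂, the interpretation of the complement of e e' equals the interpretation of (ē ⊤_{n₂}) + (⊤_{n₁} ē'), i.e. 2^{n₁+n₂} − ⟦e e'⟧ = (⟦ē⟧ · 2^{n₂}) ∪ (2^{n₁} · ⟦ē'⟧), where · denotes elementwise string concatenation of sets. -/
/-- Match expressions, indexed by their width. -/
inductive MExp : ℕ → Type
  | eps : MExp 0
  | bot {n : ℕ} : MExp n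
  | b0 : MExp 1
  | b1 : MExp 1
  | wx : MExp 1
  | cat {m k : ℕ} : MExp m → MExp k → MExp (m + k)
  | plus {n : ℕ} : MExp n → MExp n → MExp n
  | inter {n : ℕ} : MExp n → MExp n → MExp n
  | compl {n : ℕ} : MExp n → MExp n

/-- Interpretation of a match expression of width `n` as a set of
binary strings of length `n` (represented as lists of booleans). -/
def msem : {n : ℕ} → MExp n → Set (List Bool)
  | _, .eps => {[]}
  | _, .bot => ∅
  | _, .b0 => {[false]}
  | _, .b1 => {[true]}
  | _, .wx => {[false], [true]}
  | _, .cat e e' => {s | ∃ x ∈ msem e, ∃ y ∈ msem e', s = x ++ y}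
  | _, .plus e e' => msem e ∪ msem e'
  | _, .inter e e' => msem e ∩ msem e'
  | n, .compl e => {s : List Bool | s.length = n} \ msem e

/-- `⊤ₙ`: the concatenation of `n` wildcards (`⊤₀ = •`). -/
def mtop : (n : ℕ) → MExp n
  | 0 => .eps
  | n + 1 => .cat (mtop n) .wx

/-! Every word of `⟦e⟧` has length `n₁`, so a word of length `n₁ + n₂` factors through `⟦e⟧ ⟦e'⟧`
only via its prefix of length `n₁`; hence it misses `⟦e e'⟧` exactly when that prefix misses `⟦e⟧`
or the remaining suffix misses `⟦e'⟧`. -/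

theorem length_of_mem_msem {n : ℕ} (e : MExp n) {s : List Bool} (hs : s ∈ msem e) :
    s.length = n := by
  induction e generalizing s with
  | eps | b0 | b1 => simp_all [msem]
  | bot => simp [msem] at hs
  | wx => rcases hs with rfl | rfl <;> rfl
  | cat e e' ih ih' =>
      obtain ⟨x, hx, y, hy, rfl⟩ := hs
      simp [ih hx, ih' hy]
  | plus e e' ih ih' => exact hs.elim ih ih'
  | inter e e' ih _ => exact ih hs.1
  | compl e _ => exact hs.1

theorem msem_cat {m k : ℕ} (e : MExp m) (e' : MExp k) :
    msem (.cat e e') = Set.image2 (· ++ ·) (msem e) (msem e') := by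
  ext s
  simp only [msem, Set.mem_ofPred_eq, Set.mem_image2, eq_comm (a := s)]

theorem msem_mtop (n : ℕ) : msem (mtop n) = {s | s.length = n} := by
  induction n with
  | zero => ext s; simp [mtop, msem, List.length_eq_zero_iff]
  | succ n ih =>
      ext s
      rw [mtop, msem_cat, ih]
      constructor
      · rintro ⟨x, rfl, b, hb, rfl⟩
        rcases hb with rfl | rfl <;> simp
      · intro (hs : s.length = n + 1)
        have hne : s ≠ [] := List.ne_nil_of_length_eq_add_one hs
        refine ⟨s.dropLast, by simp [hs], [s.getLast hne], ?_, List.dropLast_append_getLast hne⟩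
        cases s.getLast hne <;> simp [msem]

open Set in
theorem diff_image2_append {α : Type*} {m k : ℕ} {A B : Set (List α)}
    (hA : ∀ x ∈ A, x.length = m) :
    {s | s.length = m + k} \ image2 (· ++ ·) A B =
      image2 (· ++ ·) ({x | x.length = m} \ A) {y | y.length = k} ∪
        image2 (· ++ ·) {x | x.length = m} ({y | y.length = k} \ B) := by
  ext s
  constructor
  · rintro ⟨hs : s.length = m + k, hAB⟩
    have hsplit := List.take_append_drop m s
    by_cases hx : s.take m ∈ A
    · refine Or.inr ⟨s.take m, by simp [hs], s.drop m, ⟨by simp [hs], fun hy => ?_⟩, hsplit⟩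
      exact hAB ⟨_, hx, _, hy, hsplit⟩
    · exact Or.inl ⟨s.take m, ⟨by simp [hs], hx⟩, s.drop m, by simp [hs], hsplit⟩
  · rintro (⟨x, ⟨hx, hxA⟩, y, hy, rfl⟩ | ⟨x, hx, y, ⟨hy, hyB⟩, rfl⟩) <;>
      refine ⟨by simp_all, ?_⟩ <;>
      rintro ⟨x', hx', y', hy', heq⟩
    · exact hxA (List.append_inj_left heq ((hA x' hx').trans hx.symm) ▸ hx')
    · exact hyB ((List.append_inj heq ((hA x' hx').trans hx.symm)).2 ▸ hy')

/-- Soundness of the complement-of-concatenation axiom: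
`⟦(e e')̄⟧ = ⟦ē ⊤_{n₂} + ⊤_{n₁} ē'⟧`. -/
theorem compl_cat_sound {n₁ n₂ : ℕ} (e : MExp n₁) (e' : MExp n₂) :
    msem (.compl (.cat e e')) =
      msem (.plus (.cat (.compl e) (mtop n₂)) (.cat (mtop n₁) (.compl e'))) := by
  show {s | s.length = n₁ + n₂} \ msem (.cat e e') =
    msem (.cat (.compl e) (mtop n₂)) ∪ msem (.cat (mtop n₁) (.compl e'))
  rw [msem_cat, msem_cat, msem_cat, msem_mtop, msem_mtop]
  exact diff_image2_append fun _ => length_of_mem_msem e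
end

section
/- If two dup-free NetKAT terms agree on heads of outputs on all inputs — i.e. hd[⟦e⟧(h)] = hd[⟦e'⟧(h)] for all packet histories h — then ⟦e⟧ = ⟦e'⟧. -/
/-- Packets: binary strings of length `n`. -/
abbrev Pk (n : ℕ) := List.Vector Bool n

/-- The `p`-th bit of a packet. -/
def getBit {n : ℕ} (π : Pk n) (p : ℕ) : Bool := π.toList.getD p false

/-- The packet `π[p ← k]`. -/
def setBit {n : ℕ} (π : Pk n) (p : ℕ) (k : Bool) : Pk n :=
  ⟨π.1.set p k, by rw [List.length_set]; exact π.2⟩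
/-- NetKAT terms over `n` one-bit fields `f₀,…,f_{n-1}`. -/
inductive NK : Type
  | zero : NK
  | one : NK
  | dup : NK
  | test (p : ℕ) (k : Bool) : NK
  | assign (p : ℕ) (k : Bool) : NK
  | plus (a b : NK) : NK
  | seq (a b : NK) : NK
  | star (a : NK) : NK
  | compl (a : NK) : NK

/-- Packet histories: a head packet together with the (possibly empty) rest. -/
abbrev Hist (n : ℕ) := Pk n × List (Pk n)

/-- `m`-fold Kleisli iteration of `f` in the powerset monad. -/
def kpow {α : Type*} (f : α → Set α) : ℕ → α → Set α
  | 0, h => {h}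
  | m + 1, h => ⋃ h' ∈ f h, kpow f m h'

/-- NetKAT packet-history semantics. -/
def nksem {n : ℕ} : NK → Hist n → Set (Hist n)
  | .zero, _ => ∅
  | .one, h => {h}
  | .dup, h => {(h.1, h.1 :: h.2)}
  | .test p k, h => if getBit h.1 p = k then {h} else ∅
  | .assign p k, h => {(setBit h.1 p k, h.2)}
  | .plus a b, h => nksem a h ∪ nksem b h
  | .seq a b, h => ⋃ h' ∈ nksem a h, nksem b h'
  | .star a, h => ⋃ m : ℕ, kpow (nksem a) m h
  | .compl a, h => {h} \ nksem a h

/-- A NetKAT term is `dup`-free if it contains no occurrence of `dup`. -/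
def dupFree : NK → Prop
  | .dup => False
  | .plus a b => dupFree a ∧ dupFree b
  | .seq a b => dupFree a ∧ dupFree b
  | .star a => dupFree a
  | .compl a => dupFree a
  | _ => True

/-! Dup-free terms only rewrite the head packet and pass the tail of the history through, so
the outputs on `(π, t)` are exactly the output heads paired with `t`. -/

theorem apply_eq_of_mem_kpow {α β : Type*} (g : α → β) {f : α → Set α}
    (hf : ∀ a, ∀ b ∈ f a, g b = g a) : ∀ (m : ℕ) {a b : α}, b ∈ kpow f m a → g b = g a
  | 0, _, _, hb => by rw [kpow, Set.mem_singleton_iff] at hb; rw [hb]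
  | m + 1, _, _, hb => by
    simp only [kpow, Set.mem_iUnion] at hb
    obtain ⟨c, hc, hb⟩ := hb
    rw [apply_eq_of_mem_kpow g hf m hb, hf _ _ hc]

theorem dupFree.snd_eq_of_mem_nksem {n : ℕ} {e : NK} (he : dupFree e) :
    ∀ {h x : Hist n}, x ∈ nksem e h → x.2 = h.2 := by
  induction e with
  | zero => simp [nksem]
  | one | assign => simp +contextual [nksem]
  | dup => exact he.elim
  | test p k => intro h x hx; simp only [nksem] at hx; split at hx <;> simp_all
  | plus a b iha ihb =>
    rintro h x (hx | hx)
    exacts [iha he.1 hx, ihb he.2 hx]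
  | seq a b iha ihb =>
    intro h x hx
    simp only [nksem, Set.mem_iUnion] at hx
    obtain ⟨y, hy, hx⟩ := hx
    rw [ihb he.2 hx, iha he.1 hy]
  | star a iha =>
    intro h x hx
    simp only [nksem, Set.mem_iUnion] at hx
    obtain ⟨m, hx⟩ := hx
    exact apply_eq_of_mem_kpow Prod.snd (fun _ _ => iha he) m hx
  | compl a => intro h x hx; rw [(Set.mem_singleton_iff.mp hx.1)]

theorem Set.eq_image_fst_prod_singleton {α β : Type*} {S : Set (α × β)} {t : β}
    (hS : ∀ x ∈ S, x.2 = t) : S = (Prod.fst '' S) ×ˢ {t} := by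
  ext ⟨a, b⟩
  constructor
  · intro hab
    exact ⟨⟨_, hab, rfl⟩, hS _ hab⟩
  · rintro ⟨⟨⟨a, b'⟩, hab', rfl⟩, rfl : b = t⟩
    rwa [← hS _ hab']

theorem dupFree.nksem_eq_image_fst_prod {n : ℕ} {e : NK} (he : dupFree e) (h : Hist n) :
    nksem e h = (Prod.fst '' nksem e h) ×ˢ {h.2} :=
  Set.eq_image_fst_prod_singleton fun _ => he.snd_eq_of_mem_nksem

/-- If two `dup`-free NetKAT terms agree on the heads of their outputs on all
input histories, then their full history semantics coincide. -/
theorem dupFree_head_determined {n : ℕ} (e e' : NK)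
    (he : dupFree e) (he' : dupFree e')
    (hagree : ∀ h : Hist n, Prod.fst '' nksem e h = Prod.fst '' nksem e' h) :
    ∀ h : Hist n, nksem e h = nksem (n := n) e' h := by
  intro h
  rw [he.nksem_eq_image_fst_prod, he'.nksem_eq_image_fst_prod h, hagree]
end
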